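/- arXiv:1710.05177 — 2 statements merged into one kernel-verified Lean document; each statement's English description precedes it below -/
import Mathlib

section
/- The Zeeman Z topology on Minkowski space ℝ⁴ equals the intersection topology of the Euclidean topology E and the interval topology T_in^→ induced by the irreflexive horismos relation; that is, the family {U ∩ V : U open in E, V open in T_in^→} forms a base for the Zeeman Z topology. -/
open Topology Set

/-- Minkowski space: `ℝ⁴` with the Euclidean metric structure. -/
abbrev M : Type := EuclideanSpace ℝ (Fin 4)

/-- The characteristic quadratic form `Q(x) = x₀² − x₁² − x₂² − x₃²`. -/
noncomputable def Q (x : M) : ℝ := x 0 ^ 2 - x 1 ^ 2 - x 2 ^ 2 - x 3 ^ 2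

/-- The Euclidean topology `E` on `M`. -/
noncomputable def E : TopologicalSpace M := inferInstance

/-- The light cone of `x`. -/
def lightCone (x : M) : Set M := {y | Q (y - x) = 0}

/-- The time cone of `x`. -/
def timeCone (x : M) : Set M := {x} ∪ {y | Q (y - x) > 0}

/-- The space cone of `x`. -/
def spaceCone (x : M) : Set M := {x} ∪ {y | Q (y - x) < 0}

/-- The basic open sets `Z_ε(x) = B_ε^E(x) ∩ (C^T(x) ∪ C^S(x))` of the Zeeman `Z` topology. -/
def Zset (x : M) (ε : ℝ) : Set M := Metric.ball x ε ∩ (timeCone x ∪ spaceCone x)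

/-- The Zeeman `Z` topology, generated by the base of the sets `Z_ε(x)`. -/
def ZeemanZ : TopologicalSpace M :=
  TopologicalSpace.generateFrom {s | ∃ x : M, ∃ ε : ℝ, 0 < ε ∧ s = Zset x ε}

/-- The irreflexive horismos relation `x → y`. -/
def horismos (x y : M) : Prop := y ≠ x ∧ Q (y - x) = 0 ∧ (y - x) 0 > 0

/-- The future null cone `N⁺(x)`. -/
def Nplus (x : M) : Set M := {y | horismos x y}

/-- The past null cone `N⁻(x)`. -/
def Nminus (x : M) : Set M := {y | horismos y x}

/-- The interval topology `T_in^→` induced by the irreflexive horismos relation,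
generated by the subbase of complements of future and past null cones. -/
def Tin : TopologicalSpace M :=
  TopologicalSpace.generateFrom
    ({s | ∃ x : M, s = univ \ Nplus x} ∪ {s | ∃ x : M, s = univ \ Nminus x})

/-- A time axis: an affine line with timelike direction. -/
def IsTimeAxis (L : Set M) : Prop :=
  ∃ a v : M, Q v > 0 ∧ L = {p | ∃ t : ℝ, p = a + t • v}

/-- A space axis: an affine 3-flat whose direction is a 3-dimensional subspace
on which `Q` is negative definite. -/
def IsSpaceAxis (L : Set M) : Prop :=
  ∃ a : M, ∃ W : Submodule ℝ M, Module.finrank ℝ W = 3 ∧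
    (∀ w ∈ W, w ≠ 0 → Q w < 0) ∧ L = {p | ∃ w ∈ W, p = a + w}

/-- A topology `t` on `M` induces the Euclidean subspace topology on every time axis
and on every space axis. -/
def InducesEuclideanOnAxes (t : TopologicalSpace M) : Prop :=
  (∀ L : Set M, IsTimeAxis L →
    TopologicalSpace.induced (Subtype.val : L → M) t =
      TopologicalSpace.induced (Subtype.val : L → M) E) ∧
  (∀ L : Set M, IsSpaceAxis L →
    TopologicalSpace.induced (Subtype.val : L → M) t =
      TopologicalSpace.induced (Subtype.val : L → M) E)

/-- Zeeman's Fine topology `F`: the finest topology on `M` inducing the Euclidean topology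
on every time and space axis.  (In Mathlib's lattice of topologies, `≤` means "finer",
so the finest such topology is the infimum of the family.) -/
noncomputable def FineF : TopologicalSpace M :=
  sInf {t : TopologicalSpace M | InducesEuclideanOnAxes t}

/-- The chronological order `x ≪ y`. -/
def chron (x y : M) : Prop := Q (y - x) > 0 ∧ (y - x) 0 > 0

/-! A nonzero null vector has nonzero time component, so `y ∉ N⁺(x)` exactly when `y` lies in
`C^T(x) ∪ C^S(x)` or strictly in the past half-space of `x`, and dually for `N⁻(x)`. The two
half-spaces are disjoint, hence `(M \ N⁺(x)) ∩ (M \ N⁻(x)) = C^T(x) ∪ C^S(x)`, and every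
`Z_ε(x)` is the intersection of the Euclidean ball `B_ε(x)` with a `T_in^→`-open set.
Conversely `Z` is finer than `E` (each `Z_ε(x)` lies in `B_ε(x)`) and than `T_in^→` (the cone
set is `Z`-open and the half-spaces are `E`-open), so every `U ∩ V` is `Z`-open. -/

open TopologicalSpace

lemma Q_neg (v : M) : Q (-v) = Q v := by simp [Q]

lemma Q_sub_comm (x y : M) : Q (x - y) = Q (y - x) := by rw [← neg_sub, Q_neg]

lemma continuous_Q : Continuous Q := by unfold Q; fun_prop

lemma apply_zero_ne_zero_of_Q_eq_zero {v : M} (hQ : Q v = 0) (hv : v ≠ 0) : v 0 ≠ 0 := by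
  intro h0
  refine hv ?_
  have hspace : v 1 ^ 2 + v 2 ^ 2 + v 3 ^ 2 = 0 := by unfold Q at hQ; rw [h0] at hQ; linarith
  have h1 : v 1 = 0 := by nlinarith [sq_nonneg (v 1), sq_nonneg (v 2), sq_nonneg (v 3)]
  have h2 : v 2 = 0 := by nlinarith [sq_nonneg (v 1), sq_nonneg (v 2), sq_nonneg (v 3)]
  have h3 : v 3 = 0 := by nlinarith [sq_nonneg (v 1), sq_nonneg (v 2), sq_nonneg (v 3)]
  ext i
  fin_cases i <;> simp [h0, h1, h2, h3]

lemma mem_timeCone_union_spaceCone {x y : M} :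
    y ∈ timeCone x ∪ spaceCone x ↔ y = x ∨ Q (y - x) ≠ 0 := by
  simp only [timeCone, spaceCone, mem_union, mem_singleton_iff, mem_ofPred_eq]
  grind

lemma mem_timeCone_union_spaceCone_comm {x y : M} :
    y ∈ timeCone x ∪ spaceCone x ↔ x ∈ timeCone y ∪ spaceCone y := by
  rw [mem_timeCone_union_spaceCone, mem_timeCone_union_spaceCone, Q_sub_comm, eq_comm]

lemma not_horismos_iff {x y : M} :
    ¬horismos x y ↔ y ∈ timeCone x ∪ spaceCone x ∨ (y - x) 0 < 0 := by
  rw [mem_timeCone_union_spaceCone, horismos, ← sub_ne_zero]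
  constructor
  · intro h
    by_cases hv : y - x = 0
    · exact Or.inl (Or.inl (sub_eq_zero.mp hv))
    by_cases hQ : Q (y - x) = 0
    · exact Or.inr ((apply_zero_ne_zero_of_Q_eq_zero hQ hv).lt_of_le
        (not_lt.mp fun h0 => h ⟨hv, hQ, h0⟩))
    · exact Or.inl (Or.inr hQ)
  · rintro ((hyx | hQ) | h0) ⟨hv, hQ', h0'⟩
    exacts [hv (sub_eq_zero.mpr hyx), hQ hQ', h0.not_gt h0']

lemma compl_Nplus_eq (x : M) :
    univ \ Nplus x = (timeCone x ∪ spaceCone x) ∪ {y | (y - x) 0 < 0} := by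
  ext y
  rw [mem_union, mem_sdiff, Nplus, mem_ofPred_eq, mem_ofPred_eq, ← not_horismos_iff]
  exact and_iff_right (mem_univ y)

lemma compl_Nminus_eq (x : M) :
    univ \ Nminus x = (timeCone x ∪ spaceCone x) ∪ {y | (x - y) 0 < 0} := by
  ext y
  rw [mem_union, mem_sdiff, Nminus, mem_ofPred_eq, mem_ofPred_eq,
    mem_timeCone_union_spaceCone_comm, ← not_horismos_iff]
  exact and_iff_right (mem_univ y)

lemma timeCone_union_spaceCone_eq_inter (x : M) :
    timeCone x ∪ spaceCone x = (univ \ Nplus x) ∩ (univ \ Nminus x) := by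
  rw [compl_Nplus_eq, compl_Nminus_eq, ← union_inter_distrib_left, eq_comm, union_eq_left]
  rintro y ⟨hpast, hfuture⟩
  simp only [mem_ofPred_eq, PiLp.sub_apply, sub_neg] at hpast hfuture
  exact (hpast.asymm hfuture).elim

lemma mem_Zset_self (x : M) {ε : ℝ} (hε : 0 < ε) : x ∈ Zset x ε :=
  ⟨Metric.mem_ball_self hε, Or.inl (Or.inl rfl)⟩

lemma Zset_subset_ball (x : M) (ε : ℝ) : Zset x ε ⊆ Metric.ball x ε := inter_subset_left

lemma Zset_mono (x : M) {δ ε : ℝ} (h : δ ≤ ε) : Zset x δ ⊆ Zset x ε :=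
  inter_subset_inter_left _ (Metric.ball_subset_ball h)

lemma exists_Zset_subset_of_isOpen {U : Set M} (hU : IsOpen U) {a : M} (ha : a ∈ U) :
    ∃ δ > 0, Zset a δ ⊆ U := by
  obtain ⟨δ, hδ, hball⟩ := Metric.isOpen_iff.mp hU a ha
  exact ⟨δ, hδ, (Zset_subset_ball a δ).trans hball⟩

lemma exists_Zset_subset_Zset {x a : M} {ε : ℝ} (ha : a ∈ Zset x ε) :
    ∃ δ > 0, Zset a δ ⊆ Zset x ε := by
  obtain rfl | hQ := mem_timeCone_union_spaceCone.mp ha.2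
  · exact ⟨ε, Metric.pos_of_mem_ball ha.1, subset_rfl⟩
  have hopen : IsOpen (Metric.ball x ε ∩ {y | Q (y - x) ≠ 0}) :=
    Metric.isOpen_ball.inter <|
      isOpen_ne_fun (continuous_Q.comp (continuous_sub_right x)) continuous_const
  obtain ⟨δ, hδ, hsub⟩ := exists_Zset_subset_of_isOpen hopen ⟨ha.1, hQ⟩
  exact ⟨δ, hδ, fun y hy =>
    ⟨(hsub hy).1, mem_timeCone_union_spaceCone.mpr (Or.inr (hsub hy).2)⟩⟩

lemma isTopologicalBasis_Zset :
    @IsTopologicalBasis M ZeemanZ {s | ∃ x : M, ∃ ε : ℝ, 0 < ε ∧ s = Zset x ε} := by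
  refine @IsTopologicalBasis.mk M ZeemanZ _ ?_ ?_ rfl
  · rintro _ ⟨x, ε, -, rfl⟩ _ ⟨x', ε', -, rfl⟩ a ⟨ha, ha'⟩
    obtain ⟨δ, hδ, hsub⟩ := exists_Zset_subset_Zset ha
    obtain ⟨δ', hδ', hsub'⟩ := exists_Zset_subset_Zset ha'
    have hmin : 0 < min δ δ' := lt_min hδ hδ'
    refine ⟨Zset a (min δ δ'), ⟨a, _, hmin, rfl⟩, mem_Zset_self a hmin,
      subset_inter ((Zset_mono a (min_le_left _ _)).trans hsub)
        ((Zset_mono a (min_le_right _ _)).trans hsub')⟩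
  · exact sUnion_eq_univ_iff.mpr fun a =>
      ⟨Zset a 1, ⟨a, 1, one_pos, rfl⟩, mem_Zset_self a one_pos⟩

lemma isOpen_zeemanZ_iff {s : Set M} :
    IsOpen[ZeemanZ] s ↔ ∀ a ∈ s, ∃ δ > 0, Zset a δ ⊆ s := by
  rw [IsTopologicalBasis.isOpen_iff (t := ZeemanZ) isTopologicalBasis_Zset]
  constructor
  · intro h a ha
    obtain ⟨_, ⟨x, ε, -, rfl⟩, hax, hsub⟩ := h a ha
    obtain ⟨δ, hδ, hδsub⟩ := exists_Zset_subset_Zset hax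
    exact ⟨δ, hδ, hδsub.trans hsub⟩
  · intro h a ha
    obtain ⟨δ, hδ, hsub⟩ := h a ha
    exact ⟨Zset a δ, ⟨a, δ, hδ, rfl⟩, mem_Zset_self a hδ, hsub⟩

lemma zeemanZ_le_E : ZeemanZ ≤ E := fun _ hU =>
  isOpen_zeemanZ_iff.mpr fun _ ha => exists_Zset_subset_of_isOpen hU ha

lemma isOpen_zeemanZ_timeCone_union_spaceCone (x : M) :
    IsOpen[ZeemanZ] (timeCone x ∪ spaceCone x) :=
  isOpen_zeemanZ_iff.mpr fun a ha =>
    let ⟨δ, hδ, hsub⟩ :=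
      exists_Zset_subset_Zset (ε := dist a x + 1) ⟨Metric.mem_ball.mpr (lt_add_one _), ha⟩
    ⟨δ, hδ, hsub.trans inter_subset_right⟩

lemma zeemanZ_le_Tin : ZeemanZ ≤ Tin := by
  refine le_generateFrom ?_
  rintro _ (⟨x, rfl⟩ | ⟨x, rfl⟩)
  · rw [compl_Nplus_eq]
    exact @IsOpen.union M _ _ ZeemanZ (isOpen_zeemanZ_timeCone_union_spaceCone x)
      (zeemanZ_le_E _ (isOpen_lt (by fun_prop) continuous_const :
        IsOpen {y : M | (y - x) 0 < 0}))
  · rw [compl_Nminus_eq]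
    exact @IsOpen.union M _ _ ZeemanZ (isOpen_zeemanZ_timeCone_union_spaceCone x)
      (zeemanZ_le_E _ (isOpen_lt (by fun_prop) continuous_const :
        IsOpen {y : M | (x - y) 0 < 0}))

lemma isOpen_Tin_timeCone_union_spaceCone (x : M) : IsOpen[Tin] (timeCone x ∪ spaceCone x) := by
  rw [timeCone_union_spaceCone_eq_inter]
  exact @IsOpen.inter M Tin _ _ (isOpen_generateFrom_of_mem (Or.inl ⟨x, rfl⟩))
    (isOpen_generateFrom_of_mem (Or.inr ⟨x, rfl⟩))

/-- The Zeeman `Z` topology equals the intersection topology of the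
Euclidean topology `E` and the interval topology `T_in^→`: the family
`{U ∩ V : U open in E, V open in T_in^→}` forms a base for the Zeeman `Z` topology. -/
theorem zeemanZ_eq_intersectionTopology :
    @TopologicalSpace.IsTopologicalBasis M ZeemanZ
      {s : Set M | ∃ U V : Set M, IsOpen[E] U ∧ IsOpen[Tin] V ∧ s = U ∩ V} := by
  refine @isTopologicalBasis_of_isOpen_of_nhds M ZeemanZ _ ?_ ?_
  · rintro _ ⟨U, V, hU, hV, rfl⟩
    exact @IsOpen.inter M ZeemanZ _ _ (zeemanZ_le_E U hU) (zeemanZ_le_Tin V hV)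
  · intro a u hau hu
    obtain ⟨δ, hδ, hsub⟩ := isOpen_zeemanZ_iff.mp hu a hau
    exact ⟨Zset a δ, ⟨_, _, Metric.isOpen_ball, isOpen_Tin_timeCone_union_spaceCone a, rfl⟩,
      mem_Zset_self a hδ, hsub⟩
end

section
/- For every x in Minkowski space ℝ⁴ and every ε > 0, the set Z_ε(x) = B_ε^E(x) ∩ (C^T(x) ∪ C^S(x)) is not open in the Euclidean topology on ℝ⁴. -/
open Topology Set

/-! `x` lies in `Z_ε(x)`, but the light cone of `x` meets `Z_ε(x)` only in `x` and still
accumulates at `x` (along the null line through `x` in direction `e₀ + e₁`), so `x` is not a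
Euclidean interior point of `Z_ε(x)`. -/

theorem Q_smul (c : ℝ) (v : M) : Q (c • v) = c ^ 2 * Q v := by
  simp only [Q, PiLp.smul_apply, smul_eq_mul]
  ring

noncomputable def nullVector : M := EuclideanSpace.single 0 1 + EuclideanSpace.single 1 1

theorem Q_nullVector : Q nullVector = 0 := by
  simp [Q, nullVector]

theorem nullVector_ne_zero : nullVector ≠ 0 := by
  intro h
  simpa [nullVector] using congrArg (fun v : M => v 0) h

theorem eq_of_mem_timeCone_union_spaceCone_of_mem_lightCone {x y : M}
    (hcone : y ∈ timeCone x ∪ spaceCone x) (hnull : y ∈ lightCone x) : y = x := by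
  change Q (y - x) = 0 at hnull
  rcases hcone with (h | h) | (h | h)
  · exact h
  · exact absurd hnull (ne_of_gt h)
  · exact h
  · exact absurd hnull (ne_of_lt h)

theorem mem_closure_lightCone_diff_self (x : M) : x ∈ closure (lightCone x \ {x}) := by
  have hcurve : Filter.Tendsto (fun t : ℝ => x + t • nullVector) (𝓝[≠] 0) (𝓝 x) := by
    have : Continuous (fun t : ℝ => x + t • nullVector) := by fun_prop
    simpa using (this.tendsto 0).mono_left nhdsWithin_le_nhds
  refine mem_closure_of_tendsto hcurve (eventually_nhdsWithin_of_forall fun t ht => ⟨?_, ?_⟩)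
  · simp [lightCone, Q_smul, Q_nullVector]
  · simpa using And.intro (mem_compl_singleton_iff.1 ht) nullVector_ne_zero

/-- For every `x` and every `ε > 0`, the set
`Z_ε(x) = B_ε^E(x) ∩ (C^T(x) ∪ C^S(x))` is not open in the Euclidean topology. -/
theorem Zset_not_euclidean_open (x : M) (ε : ℝ) (hε : 0 < ε) :
    ¬ IsOpen[E] (Zset x ε) := by
  intro hopen
  have hx : x ∈ Zset x ε := ⟨Metric.mem_ball_self hε, Or.inl (Or.inl rfl)⟩
  obtain ⟨y, hyZ, hyL, hyx⟩ :=
    mem_closure_iff_nhds.1 (mem_closure_lightCone_diff_self x) _ (hopen.mem_nhds hx)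
  exact hyx (eq_of_mem_timeCone_union_spaceCone_of_mem_lightCone hyZ.2 hyL)
end
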